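/- arXiv:2307.15822 — 5 statements merged into one kernel-verified Lean document; each statement's English description precedes it below -/
import Mathlib

section
/- Let Λ ⊂ ℝ^d be a lattice and F: ℝ^d → [0,∞] be Λ-periodic, and suppose g ∈ L²(ℝ^d/Λ) is continuous with absolutely summable Fourier coefficients, ĝ_v ≥ 0 for all v ∈ Λ*\{0}, and g ≤ F pointwise. If ω_n is an n-point configuration such that g(x-y) = F(x-y) for all distinct x,y ∈ ω_n, and ĝ_v · ∑_{x∈ω_n} e^{2πi v·x} = 0 for all v ∈ Λ*\{0}, then E_F(ω_n) = n²ĝ_0 - n g(0) and ω_n minimizes E_F among all n-point configurations in ℝ^d. -/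
open Complex Finset ComplexConjugate

/-! If `g = ∑ ĝ_v e_v` with `ĝ_v ≥ 0` off `v = 0`, then for any configuration `y`,
`∑_{i,j} g(y_i - y_j) = ∑_v ĝ_v |∑_i e_v(y_i)|² ≥ n² ĝ_0`, with equality when every term
with `v ≠ 0` vanishes. Removing the diagonal gives `n² ĝ_0 - n g(0)` as a lower bound
for the `g`-energy of every configuration, attained by `x`; since `g ≤ F` everywhere and
`g = F` at the differences of `x`, the same holds for the `F`-energy. -/

lemma EReal.coe_finsetSum {α : Type*} (s : Finset α) (f : α → ℝ) :
    ((∑ i ∈ s, f i : ℝ) : EReal) = ∑ i ∈ s, (f i : EReal) :=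
  map_sum (⟨⟨Real.toEReal, EReal.coe_zero⟩, EReal.coe_add⟩ : ℝ →+ EReal) f s

section FourierMode

variable {ι : Type*} [Fintype ι]

noncomputable def fourierMode (v y : ι → ℝ) : ℂ :=
  exp (2 * Real.pi * I * (v ⬝ᵥ y : ℝ))

lemma norm_fourierMode (v y : ι → ℝ) : ‖fourierMode v y‖ = 1 := by
  rw [fourierMode, show 2 * Real.pi * I * (v ⬝ᵥ y : ℝ) = ((2 * Real.pi * (v ⬝ᵥ y) : ℝ) : ℂ) * I by
    push_cast; ring]
  exact norm_exp_ofReal_mul_I _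

lemma fourierMode_zero_left (y : ι → ℝ) : fourierMode 0 y = 1 := by
  simp [fourierMode]

lemma fourierMode_sub (v a b : ι → ℝ) :
    fourierMode v (a - b) = fourierMode v a * conj (fourierMode v b) := by
  rw [fourierMode, fourierMode, fourierMode, ← exp_conj, ← exp_add, dotProduct_sub]
  congr 1
  simp only [map_mul, conj_I, conj_ofReal, map_ofNat]
  push_cast
  ring

noncomputable def expSum {n : ℕ} (v : ι → ℝ) (y : Fin n → ι → ℝ) : ℂ :=
  ∑ i, fourierMode v (y i)

lemma expSum_zero_left {n : ℕ} (y : Fin n → ι → ℝ) : expSum 0 y = n := by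
  simp [expSum, fourierMode_zero_left]

lemma normSq_expSum_le {n : ℕ} (v : ι → ℝ) (y : Fin n → ι → ℝ) :
    normSq (expSum v y) ≤ (n : ℝ) ^ 2 := by
  have h : ‖expSum v y‖ ≤ n := by
    calc ‖expSum v y‖ ≤ ∑ i, ‖fourierMode v (y i)‖ := norm_sum_le _ _
      _ = n := by simp [norm_fourierMode]
  rw [normSq_eq_norm_sq]
  gcongr

end FourierMode

section FourierSeries

variable {ι : Type*} [Fintype ι] {D : Set (ι → ℝ)} {c : (ι → ℝ) → ℝ}

lemma summable_coeff_mul_fourierMode (hc : Summable fun v : D => |c v|) (z : ι → ℝ) :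
    Summable fun v : D => (c v : ℂ) * fourierMode v z := by
  refine Summable.of_norm (hc.congr fun v => ?_)
  rw [norm_mul, norm_fourierMode, mul_one, norm_real, Real.norm_eq_abs]

lemma summable_coeff_mul_normSq_expSum {n : ℕ} (hc : Summable fun v : D => |c v|)
    (y : Fin n → ι → ℝ) : Summable fun v : D => c v * normSq (expSum v y) := by
  refine Summable.of_norm_bounded (hc.mul_right ((n : ℝ) ^ 2)) fun v => ?_
  rw [Real.norm_eq_abs, abs_mul, abs_of_nonneg (normSq_nonneg _)]
  exact mul_le_mul_of_nonneg_left (normSq_expSum_le _ _) (abs_nonneg _)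

lemma sum_sum_sub_eq_tsum_mul_normSq_expSum {n : ℕ} (hc : Summable fun v : D => |c v|)
    {g : (ι → ℝ) → ℝ} (hg : ∀ z, (g z : ℂ) = ∑' v : D, (c v : ℂ) * fourierMode v z)
    (y : Fin n → ι → ℝ) :
    ∑ i, ∑ j, g (y i - y j) = ∑' v : D, c v * normSq (expSum v y) := by
  have hsummable := summable_coeff_mul_fourierMode hc
  apply ofReal_injective
  push_cast
  calc ∑ i, ∑ j, (g (y i - y j) : ℂ)
      = ∑ i, ∑ j, ∑' v : D, (c v : ℂ) * fourierMode v (y i - y j) := by simp only [hg]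
    _ = ∑ i, ∑' v : D, ∑ j, (c v : ℂ) * fourierMode v (y i - y j) :=
        sum_congr rfl fun i _ => (Summable.tsum_finsetSum fun j _ => hsummable _).symm
    _ = ∑' v : D, ∑ i, ∑ j, (c v : ℂ) * fourierMode v (y i - y j) :=
        (Summable.tsum_finsetSum fun i _ => summable_sum fun j _ => hsummable _).symm
    _ = ∑' v : D, (c v : ℂ) * (normSq (expSum v y) : ℂ) := by
        refine tsum_congr fun v => ?_
        rw [← mul_conj, expSum, map_sum, sum_mul_sum, mul_sum]
        simp only [fourierMode_sub, mul_sum]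

lemma sq_mul_coeff_zero_le_tsum {n : ℕ} (hc : Summable fun v : D => |c v|) (h0 : (0 : ι → ℝ) ∈ D)
    (hpos : ∀ v ∈ D, v ≠ 0 → 0 ≤ c v) (y : Fin n → ι → ℝ) :
    (n : ℝ) ^ 2 * c 0 ≤ ∑' v : D, c v * normSq (expSum v y) := by
  have h := (summable_coeff_mul_normSq_expSum hc y).le_tsum ⟨0, h0⟩ fun v hv =>
    mul_nonneg (hpos v v.2 fun h => hv (Subtype.ext h)) (normSq_nonneg _)
  rwa [expSum_zero_left, normSq_natCast, ← sq, mul_comm] at h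

lemma tsum_eq_sq_mul_coeff_zero {n : ℕ} (h0 : (0 : ι → ℝ) ∈ D) {y : Fin n → ι → ℝ}
    (hmom : ∀ v ∈ D, v ≠ 0 → (c v : ℂ) * expSum v y = 0) :
    ∑' v : D, c v * normSq (expSum v y) = (n : ℝ) ^ 2 * c 0 := by
  refine (tsum_eq_single ⟨0, h0⟩ fun v hv => ?_).trans ?_
  · rcases mul_eq_zero.mp (hmom v v.2 fun h => hv (Subtype.ext h)) with h | h
    · rw [ofReal_eq_zero.mp h, zero_mul]
    · rw [h, map_zero, mul_zero]
  · rw [expSum_zero_left, normSq_natCast, ← sq, mul_comm]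

end FourierSeries

section PairEnergy

variable {X M : Type*} [AddGroup X] [AddCommMonoid M]

def pairEnergy {n : ℕ} (F : X → M) (y : Fin n → X) : M :=
  ∑ i, ∑ j, if i ≠ j then F (y i - y j) else 0

lemma sum_sum_sub_eq_pairEnergy_add {n : ℕ} (f : X → M) (y : Fin n → X) :
    ∑ i, ∑ j, f (y i - y j) = pairEnergy f y + n • f 0 := by
  have h : ∀ i j, f (y i - y j) =
      (if i ≠ j then f (y i - y j) else 0) + if i = j then f 0 else 0 := by
    intro i j
    by_cases hij : i = j <;> simp [hij]
  rw [sum_congr rfl fun i _ => sum_congr rfl fun j _ => h i j]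
  simp [sum_add_distrib, pairEnergy]

lemma pairEnergy_coe {n : ℕ} (f : X → ℝ) (y : Fin n → X) :
    pairEnergy (fun z => (f z : EReal)) y = ((pairEnergy f y : ℝ) : EReal) := by
  simp only [pairEnergy, EReal.coe_finsetSum]
  refine sum_congr rfl fun i _ => sum_congr rfl fun j _ => ?_
  split_ifs <;> simp

lemma pairEnergy_congr {n : ℕ} {F G : X → M} {y : Fin n → X}
    (h : ∀ i j, i ≠ j → F (y i - y j) = G (y i - y j)) : pairEnergy F y = pairEnergy G y :=
  sum_congr rfl fun i _ => sum_congr rfl fun j _ => by split_ifs with hij <;> simp [h i j, hij]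

lemma pairEnergy_mono [Preorder M] [IsOrderedAddMonoid M] {n : ℕ} {F G : X → M}
    (h : ∀ z, F z ≤ G z) (y : Fin n → X) : pairEnergy F y ≤ pairEnergy G y :=
  sum_le_sum fun i _ => sum_le_sum fun j _ => by split_ifs <;> simp [h]

end PairEnergy

section Energy

variable {ι : Type*} [Fintype ι] {D : Set (ι → ℝ)} {c g : (ι → ℝ) → ℝ} {n : ℕ}

lemma sq_mul_coeff_zero_sub_le_pairEnergy (hc : Summable fun v : D => |c v|)
    (hg : ∀ z, (g z : ℂ) = ∑' v : D, (c v : ℂ) * fourierMode v z) (h0 : (0 : ι → ℝ) ∈ D)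
    (hpos : ∀ v ∈ D, v ≠ 0 → 0 ≤ c v) (y : Fin n → ι → ℝ) :
    (n : ℝ) ^ 2 * c 0 - n * g 0 ≤ pairEnergy g y := by
  have h := sum_sum_sub_eq_tsum_mul_normSq_expSum hc hg y
  rw [sum_sum_sub_eq_pairEnergy_add, nsmul_eq_mul] at h
  linarith [sq_mul_coeff_zero_le_tsum hc h0 hpos y]

lemma pairEnergy_eq_sq_mul_coeff_zero_sub (hc : Summable fun v : D => |c v|)
    (hg : ∀ z, (g z : ℂ) = ∑' v : D, (c v : ℂ) * fourierMode v z) (h0 : (0 : ι → ℝ) ∈ D)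
    {y : Fin n → ι → ℝ} (hmom : ∀ v ∈ D, v ≠ 0 → (c v : ℂ) * expSum v y = 0) :
    pairEnergy g y = (n : ℝ) ^ 2 * c 0 - n * g 0 := by
  have h := sum_sum_sub_eq_tsum_mul_normSq_expSum hc hg y
  rw [sum_sum_sub_eq_pairEnergy_add, nsmul_eq_mul, tsum_eq_sq_mul_coeff_zero h0 hmom] at h
  linarith

end Energy

theorem stmt_4_general (d n : ℕ)
    (L : Set (Fin d → ℝ))
    (D : Set (Fin d → ℝ))
    (hD : D = {v | ∀ w ∈ L, ∃ m : ℤ, dotProduct v w = (m : ℝ)})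
    (F : (Fin d → ℝ) → EReal)
    (gh : (Fin d → ℝ) → ℝ)
    (hsum : Summable fun v : D => |gh (v : Fin d → ℝ)|)
    (hpos : ∀ v ∈ D, v ≠ 0 → 0 ≤ gh v)
    (g : (Fin d → ℝ) → ℝ)
    (hg : ∀ y : Fin d → ℝ, (g y : ℂ) = ∑' v : D, (gh (v : Fin d → ℝ) : ℂ) *
      Complex.exp (2 * Real.pi * Complex.I * (dotProduct (v : Fin d → ℝ) y : ℝ)))
    (hgF : ∀ y, (g y : EReal) ≤ F y)
    (x : Fin n → Fin d → ℝ)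
    (htouch : ∀ i j : Fin n, i ≠ j → (g (x i - x j) : EReal) = F (x i - x j))
    (hmom : ∀ v ∈ D, v ≠ 0 → (gh v : ℂ) *
      ∑ i, Complex.exp (2 * Real.pi * Complex.I * (dotProduct v (x i) : ℝ)) = 0) :
    (∑ i, ∑ j, if i ≠ j then F (x i - x j) else 0)
        = (((n : ℝ) ^ 2 * gh 0 - (n : ℝ) * g 0 : ℝ) : EReal) ∧
    ∀ y : Fin n → Fin d → ℝ,
      (∑ i, ∑ j, if i ≠ j then F (x i - x j) else 0) ≤
        ∑ i, ∑ j, if i ≠ j then F (y i - y j) else 0 := by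
  have h0D : (0 : Fin d → ℝ) ∈ D := hD ▸ fun w _ => ⟨0, by simp⟩
  have hx : pairEnergy F x = (((n : ℝ) ^ 2 * gh 0 - (n : ℝ) * g 0 : ℝ) : EReal) := by
    rw [← pairEnergy_congr (F := fun z => (g z : EReal)) htouch, pairEnergy_coe,
      pairEnergy_eq_sq_mul_coeff_zero_sub hsum hg h0D hmom]
  refine ⟨hx, fun y => ?_⟩
  change pairEnergy F x ≤ pairEnergy F y
  calc pairEnergy F x ≤ ((pairEnergy g y : ℝ) : EReal) :=
        hx ▸ EReal.coe_le_coe (sq_mul_coeff_zero_sub_le_pairEnergy hsum hg h0D hpos y)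
    _ = pairEnergy (fun z => (g z : EReal)) y := (pairEnergy_coe g y).symm
    _ ≤ pairEnergy F y := pairEnergy_mono hgF y

/-- Sharpness criterion for linear programming bounds: if g ≤ F pointwise, g touches F at
all pairwise differences of ω_n, and all nonzero-frequency terms ĝ_v · M_v(ω_n) vanish,
then E_F(ω_n) = n²ĝ₀ - n g(0), and ω_n minimizes E_F among all n-point configurations. -/
theorem stmt_4 (d n : ℕ) (V : Matrix (Fin d) (Fin d) ℝ) (hV : IsUnit V.det)
    (L : Set (Fin d → ℝ))
    (hL : L = {w | ∃ k : Fin d → ℤ, w = V.mulVec fun i => (k i : ℝ)})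
    (D : Set (Fin d → ℝ))
    (hD : D = {v | ∀ w ∈ L, ∃ m : ℤ, dotProduct v w = (m : ℝ)})
    (F : (Fin d → ℝ) → EReal) (hF0 : ∀ y, 0 ≤ F y)
    (hFper : ∀ y : Fin d → ℝ, ∀ v ∈ L, F (y + v) = F y)
    (gh : (Fin d → ℝ) → ℝ)
    (hsupp : ∀ v ∉ D, gh v = 0)
    (hsum : Summable fun v : D => |gh (v : Fin d → ℝ)|)
    (hpos : ∀ v ∈ D, v ≠ 0 → 0 ≤ gh v)
    (g : (Fin d → ℝ) → ℝ)
    (hg : ∀ y : Fin d → ℝ, (g y : ℂ) = ∑' v : D, (gh (v : Fin d → ℝ) : ℂ) *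
      Complex.exp (2 * Real.pi * Complex.I * (dotProduct (v : Fin d → ℝ) y : ℝ)))
    (hgF : ∀ y, (g y : EReal) ≤ F y)
    (x : Fin n → Fin d → ℝ)
    (htouch : ∀ i j : Fin n, i ≠ j → (g (x i - x j) : EReal) = F (x i - x j))
    (hmom : ∀ v ∈ D, v ≠ 0 → (gh v : ℂ) *
      ∑ i, Complex.exp (2 * Real.pi * Complex.I * (dotProduct v (x i) : ℝ)) = 0) :
    (∑ i, ∑ j, if i ≠ j then F (x i - x j) else 0)
        = (((n : ℝ) ^ 2 * gh 0 - (n : ℝ) * g 0 : ℝ) : EReal) ∧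
    ∀ y : Fin n → Fin d → ℝ,
      (∑ i, ∑ j, if i ≠ j then F (x i - x j) else 0) ≤
        ∑ i, ∑ j, if i ≠ j then F (y i - y j) else 0 :=
  stmt_4_general d n L D hD F gh hsum hpos g hg hgF x htouch hmom
end

section
/- Let a ≥ 9.6 and x ∈ [0, 1/2]. Then e^{-ax²} + e^{-a(x-1)²} < θ(π/a; x) < (1 + 1/1000) e^{-ax²}(1 + e^{-a(1-2x)}) ≤ 2(1 + 1/1000) e^{-ax²}, where θ(π/a; x) = ∑_{n∈ℤ} e^{-a(n+x)²}. -/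
/-!
Split the theta series into `n ≥ 0` and `n ≤ -1`; after `n ↦ -(n + 1)` both halves have the form
`∑_{n ≥ 0} e^{-a(n+y)²}` with `y = x` and `y = 1 - x` in `[0, 1]`. Since `(n + y)² ≥ y² + n`, each half
exceeds its first term `e^{-ay²}` and is at most `e^{-ay²} / (1 - e^{-a})`; the two first terms add up to
`e^{-ax²}(1 + e^{-a(1-2x)})`. For `a ≥ 9.6` we have `e^a > 1001`, i.e. `1 / (1 - e^{-a}) < 1 + 1/1000`.
-/

open Real

section GaussianTail

variable {a y : ℝ}

lemma exp_neg_mul_sq_nat_add_le (ha : 0 ≤ a) (hy : 0 ≤ y) (n : ℕ) :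
    exp (-a * (n + y) ^ 2) ≤ exp (-a * y ^ 2) * exp (-a) ^ n := by
  rw [← exp_nat_mul, ← exp_add, exp_le_exp]
  have hn : (n : ℝ) ≤ (n : ℝ) ^ 2 := by
    rcases n.eq_zero_or_pos with rfl | hn
    · simp
    · nlinarith [(Nat.one_le_cast (α := ℝ)).2 hn]
  nlinarith [mul_nonneg ha (mul_nonneg (Nat.cast_nonneg (α := ℝ) n) hy), mul_le_mul_of_nonneg_left hn ha]

lemma summable_exp_neg_mul_sq_nat_add (ha : 0 < a) (hy : 0 ≤ y) :
    Summable fun n : ℕ => exp (-a * (n + y) ^ 2) :=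
  .of_nonneg_of_le (fun _ => (exp_pos _).le) (exp_neg_mul_sq_nat_add_le ha.le hy)
    ((summable_geometric_of_lt_one (exp_pos _).le (exp_lt_one_iff.2 (neg_lt_zero.2 ha))).mul_left _)

lemma tsum_exp_neg_mul_sq_nat_add_le (ha : 0 < a) (hy : 0 ≤ y) :
    ∑' n : ℕ, exp (-a * (n + y) ^ 2) ≤ exp (-a * y ^ 2) / (1 - exp (-a)) := by
  have hr : exp (-a) < 1 := exp_lt_one_iff.2 (neg_lt_zero.2 ha)
  calc ∑' n : ℕ, exp (-a * (n + y) ^ 2)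
      ≤ ∑' n : ℕ, exp (-a * y ^ 2) * exp (-a) ^ n :=
        (summable_exp_neg_mul_sq_nat_add ha hy).tsum_le_tsum (exp_neg_mul_sq_nat_add_le ha.le hy)
          ((summable_geometric_of_lt_one (exp_pos _).le hr).mul_left _)
    _ = exp (-a * y ^ 2) / (1 - exp (-a)) := by
        rw [tsum_mul_left, tsum_geometric_of_lt_one (exp_pos _).le hr, div_eq_mul_inv]

lemma exp_neg_mul_sq_lt_tsum_nat_add (ha : 0 < a) (hy : 0 ≤ y) :
    exp (-a * y ^ 2) < ∑' n : ℕ, exp (-a * (n + y) ^ 2) := by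
  have hs := summable_exp_neg_mul_sq_nat_add ha hy
  rw [hs.tsum_eq_zero_add]
  have htail : 0 < ∑' n : ℕ, exp (-a * ((n + 1 : ℕ) + y) ^ 2) :=
    ((summable_nat_add_iff 1).2 hs).tsum_pos (fun _ => (exp_pos _).le) 0 (exp_pos _)
  simpa using htail

end GaussianTail

section ThetaSplit

variable {a x : ℝ}

lemma exp_neg_mul_sq_neg_succ_add (n : ℕ) :
    exp (-a * (((-(n + 1) : ℤ) : ℝ) + x) ^ 2) = exp (-a * (n + (1 - x)) ^ 2) := by
  push_cast
  ring_nf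

lemma summable_exp_neg_mul_sq_int_add (ha : 0 < a) (hx : x ∈ Set.Icc (0 : ℝ) 1) :
    Summable fun n : ℤ => exp (-a * (n + x) ^ 2) :=
  .of_nat_of_neg_add_one (by exact_mod_cast summable_exp_neg_mul_sq_nat_add ha hx.1)
    (by simpa only [exp_neg_mul_sq_neg_succ_add] using
      summable_exp_neg_mul_sq_nat_add ha (sub_nonneg.2 hx.2))

lemma tsum_exp_neg_mul_sq_int_add (ha : 0 < a) (hx : x ∈ Set.Icc (0 : ℝ) 1) :
    ∑' n : ℤ, exp (-a * (n + x) ^ 2) =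
      ∑' n : ℕ, exp (-a * (n + x) ^ 2) + ∑' n : ℕ, exp (-a * (n + (1 - x)) ^ 2) := by
  have hneg := summable_exp_neg_mul_sq_nat_add ha (sub_nonneg.2 hx.2)
  rw [tsum_of_nat_of_neg_add_one (f := fun n : ℤ => exp (-a * (n + x) ^ 2))
    (by exact_mod_cast summable_exp_neg_mul_sq_nat_add ha hx.1)
    (by simpa only [exp_neg_mul_sq_neg_succ_add] using hneg)]
  simp only [exp_neg_mul_sq_neg_succ_add, Int.cast_natCast]

end ThetaSplit

lemma exp_neg_mul_one_sub_sq (a x : ℝ) :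
    exp (-a * (1 - x) ^ 2) = exp (-a * x ^ 2) * exp (-a * (1 - 2 * x)) := by
  rw [← exp_add]
  ring_nf

lemma one_div_one_sub_exp_neg_lt {a : ℝ} (ha : 9.6 ≤ a) : 1 / (1 - exp (-a)) < 1 + 1 / 1000 := by
  have h1001 : (1001 : ℝ) < exp a :=
    calc (1001 : ℝ) < 9.6 ^ 6 / (Nat.factorial 6 : ℕ) := by norm_num [Nat.factorial]
      _ ≤ a ^ 6 / (Nat.factorial 6 : ℕ) := by gcongr
      _ ≤ exp a := pow_div_factorial_le_exp _ (by linarith) 6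
  have hr : exp (-a) * exp a = 1 := by rw [← exp_add, neg_add_cancel, exp_zero]
  have hr0 := exp_pos (-a)
  rw [div_lt_iff₀ (by nlinarith)]
  nlinarith

/-- For a ≥ 9.6 and x ∈ [0,1/2]:
e^{-ax²} + e^{-a(x-1)²} < θ(π/a;x) < (1+1/1000)e^{-ax²}(1+e^{-a(1-2x)}) ≤ 2(1+1/1000)e^{-ax²},
where θ(π/a;x) = ∑_{n∈ℤ} e^{-a(n+x)²}. -/
theorem stmt_12 (a : ℝ) (ha : 9.6 ≤ a) (x : ℝ) (hx : x ∈ Set.Icc (0 : ℝ) (1 / 2)) :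
    Real.exp (-a * x ^ 2) + Real.exp (-a * (x - 1) ^ 2)
        < ∑' n : ℤ, Real.exp (-a * ((n : ℝ) + x) ^ 2) ∧
    (∑' n : ℤ, Real.exp (-a * ((n : ℝ) + x) ^ 2))
        < (1 + 1 / 1000) * Real.exp (-a * x ^ 2) * (1 + Real.exp (-a * (1 - 2 * x))) ∧
    (1 + 1 / 1000) * Real.exp (-a * x ^ 2) * (1 + Real.exp (-a * (1 - 2 * x)))
        ≤ 2 * (1 + 1 / 1000) * Real.exp (-a * x ^ 2) := by
  have ha0 : 0 < a := by linarith
  have hx1 : x ∈ Set.Icc (0 : ℝ) 1 := ⟨hx.1, by linarith [hx.2]⟩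
  have hy : 0 ≤ 1 - x := by linarith [hx.2]
  have hE := exp_pos (-a * x ^ 2)
  have hE' := exp_pos (-a * (1 - 2 * x))
  have hr : 0 < 1 - exp (-a) := sub_pos.2 (exp_lt_one_iff.2 (by linarith))
  rw [tsum_exp_neg_mul_sq_int_add ha0 hx1]
  refine ⟨?_, ?_, ?_⟩
  · rw [show (x - 1) ^ 2 = (1 - x) ^ 2 by ring]
    exact add_lt_add (exp_neg_mul_sq_lt_tsum_nat_add ha0 hx.1) (exp_neg_mul_sq_lt_tsum_nat_add ha0 hy)
  · calc _ ≤ exp (-a * x ^ 2) / (1 - exp (-a)) + exp (-a * (1 - x) ^ 2) / (1 - exp (-a)) :=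
          add_le_add (tsum_exp_neg_mul_sq_nat_add_le ha0 hx.1) (tsum_exp_neg_mul_sq_nat_add_le ha0 hy)
      _ = 1 / (1 - exp (-a)) * (exp (-a * x ^ 2) * (1 + exp (-a * (1 - 2 * x)))) := by
          rw [exp_neg_mul_one_sub_sq]; field_simp
      _ < _ := by
          rw [mul_assoc]
          exact mul_lt_mul_of_pos_right (one_div_one_sub_exp_neg_lt ha) (by positivity)
  · have : exp (-a * (1 - 2 * x)) ≤ 1 := exp_le_one_iff.2 (by nlinarith [hx.2])
    nlinarith
end

section
/- The function t ↦ √(1-t²)/arccos(t) is concave on (-1,1). -/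
/-!
Write `t = cos y` with `y ∈ (0, π)`. The derivative of `sin (arccos t) / arccos t` at `t` is
`g y = (sin y - y cos y) / (y² sin y)`, and `g' y = y N(y) / (y² sin y)²` with
`N(y) = y² + y sin y cos y - 2 sin² y`. Since `N(0) = N'(0) = 0` and
`N''(y) = 4 sin y (sin y - y cos y) ≥ 0`, `g` is increasing on `(0, π)`; as `arccos` is
decreasing, the derivative of the function is decreasing, hence the function is concave.
-/

open Real Set

lemma nonneg_of_eq_zero_of_hasDerivAt_nonneg {f f' : ℝ → ℝ} {a b x : ℝ}
    (hf : ∀ y, HasDerivAt f (f' y) y) (ha : f a = 0) (hf' : ∀ y ∈ Ioo a b, 0 ≤ f' y)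
    (hx : x ∈ Icc a b) : 0 ≤ f x := by
  have hmono : MonotoneOn f (Icc a b) :=
    monotoneOn_of_hasDerivWithinAt_nonneg (convex_Icc a b)
      (fun y _ => (hf y).continuousAt.continuousWithinAt) (fun y _ => (hf y).hasDerivWithinAt)
      (by simpa only [interior_Icc] using hf')
  exact ha ▸ hmono (left_mem_Icc.2 (hx.1.trans hx.2)) hx hx.1

lemma mul_cos_le_sin {y : ℝ} (hy : y ∈ Icc 0 π) : y * cos y ≤ sin y := by
  have hderiv (y : ℝ) : HasDerivAt (fun y => sin y - y * cos y) (y * sin y) y :=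
    ((hasDerivAt_sin y).sub ((hasDerivAt_id' y).mul (hasDerivAt_cos y))).congr_deriv (by ring)
  have := nonneg_of_eq_zero_of_hasDerivAt_nonneg hderiv (by simp)
    (fun x hx => mul_nonneg hx.1.le (sin_nonneg_of_nonneg_of_le_pi hx.1.le hx.2.le)) hy
  linarith

lemma three_mul_sin_mul_cos_le {y : ℝ} (hy : y ∈ Icc 0 π) :
    3 * sin y * cos y ≤ 2 * y + y * (cos y ^ 2 - sin y ^ 2) := by
  have hderiv (y : ℝ) :
      HasDerivAt (fun y => 2 * y + y * (cos y ^ 2 - sin y ^ 2) - 3 * sin y * cos y)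
        (4 * sin y * (sin y - y * cos y)) y := by
    refine ((((hasDerivAt_id' y).const_mul 2).add ((hasDerivAt_id' y).mul
      (((hasDerivAt_cos y).pow 2).sub ((hasDerivAt_sin y).pow 2)))).sub
      (((hasDerivAt_sin y).const_mul 3).mul (hasDerivAt_cos y))).congr_deriv ?_
    simp only [Pi.sub_apply, Pi.pow_apply]
    linear_combination (-2) * sin_sq_add_cos_sq y
  have hderiv_nonneg (x : ℝ) (hx : x ∈ Ioo 0 π) : 0 ≤ 4 * sin x * (sin x - x * cos x) := by
    have hsin := sin_nonneg_of_nonneg_of_le_pi hx.1.le hx.2.le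
    have hsub := sub_nonneg.2 (mul_cos_le_sin (Ioo_subset_Icc_self hx))
    positivity
  have := nonneg_of_eq_zero_of_hasDerivAt_nonneg hderiv (by simp) hderiv_nonneg hy
  linarith

lemma two_mul_sin_sq_le {y : ℝ} (hy : y ∈ Icc 0 π) :
    2 * sin y ^ 2 ≤ y ^ 2 + y * sin y * cos y := by
  have hderiv (y : ℝ) : HasDerivAt (fun y => y ^ 2 + y * sin y * cos y - 2 * sin y ^ 2)
      (2 * y + y * (cos y ^ 2 - sin y ^ 2) - 3 * sin y * cos y) y := by
    refine ((((hasDerivAt_id' y).pow 2).add (((hasDerivAt_id' y).mul (hasDerivAt_sin y)).mul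
      (hasDerivAt_cos y))).sub (((hasDerivAt_sin y).pow 2).const_mul 2)).congr_deriv ?_
    simp only [Pi.mul_apply]
    ring
  have := nonneg_of_eq_zero_of_hasDerivAt_nonneg hderiv (by simp)
    (fun x hx => sub_nonneg.2 (three_mul_sin_mul_cos_le (Ioo_subset_Icc_self hx))) hy
  linarith

lemma hasDerivAt_sin_sub_mul_cos_div {y : ℝ} (hy : y ≠ 0) (hsin : sin y ≠ 0) :
    HasDerivAt (fun y => (sin y - y * cos y) / (y ^ 2 * sin y))
      (y * (y ^ 2 + y * sin y * cos y - 2 * sin y ^ 2) / (y ^ 2 * sin y) ^ 2) y := by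
  refine (((hasDerivAt_sin y).sub ((hasDerivAt_id' y).mul (hasDerivAt_cos y))).div
    (((hasDerivAt_id' y).pow 2).mul (hasDerivAt_sin y))
    (mul_ne_zero (pow_ne_zero 2 hy) hsin)).congr_deriv ?_
  simp only [Pi.mul_apply, Pi.pow_apply, Pi.sub_apply]
  field_simp
  linear_combination y ^ 3 * sin_sq_add_cos_sq y

lemma monotoneOn_sin_sub_mul_cos_div :
    MonotoneOn (fun y => (sin y - y * cos y) / (y ^ 2 * sin y)) (Ioo 0 π) := by
  have hderiv {y : ℝ} (hy : y ∈ Ioo 0 π) := hasDerivAt_sin_sub_mul_cos_div hy.1.ne'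
    (sin_pos_of_pos_of_lt_pi hy.1 hy.2).ne'
  refine monotoneOn_of_hasDerivWithinAt_nonneg (convex_Ioo 0 π)
    (fun y hy => (hderiv hy).continuousAt.continuousWithinAt)
    (fun y hy => (hderiv (by rwa [interior_Ioo] at hy)).hasDerivWithinAt) (fun y hy => ?_)
  rw [interior_Ioo] at hy
  have hN := sub_nonneg.2 (two_mul_sin_sq_le (Ioo_subset_Icc_self hy))
  have hy₀ := hy.1.le
  positivity

lemma hasDerivAt_sin_arccos_div_arccos {t : ℝ} (ht : t ∈ Ioo (-1) 1) :
    HasDerivAt (fun t => sin (arccos t) / arccos t)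
      ((sin (arccos t) - arccos t * cos (arccos t)) / (arccos t ^ 2 * sin (arccos t))) t := by
  have harccos := hasDerivAt_arccos ht.1.ne' ht.2.ne
  have hpos : 0 < arccos t := arccos_pos.2 ht.2
  have hsin : 0 < sin (arccos t) := sin_pos_of_pos_of_lt_pi hpos (arccos_lt_pi.2 ht.1)
  refine (((hasDerivAt_sin _).comp t harccos).div harccos hpos.ne').congr_deriv ?_
  rw [← sin_arccos, Function.comp_apply]
  field_simp
  ring

/-- The function t ↦ √(1-t²)/arccos(t) is concave on (-1,1). -/
theorem stmt_14 :
    ConcaveOn ℝ (Set.Ioo (-1 : ℝ) 1)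
      (fun t : ℝ => Real.sqrt (1 - t ^ 2) / Real.arccos t) := by
  simp only [← sin_arccos]
  have hderiv {t : ℝ} (ht : t ∈ Ioo (-1) 1) := hasDerivAt_sin_arccos_div_arccos ht
  have harccos {t : ℝ} (ht : t ∈ Ioo (-1) 1) : arccos t ∈ Ioo 0 π :=
    ⟨arccos_pos.2 ht.2, arccos_lt_pi.2 ht.1⟩
  refine AntitoneOn.concaveOn_of_deriv (convex_Ioo _ _)
    (fun t ht => (hderiv ht).continuousAt.continuousWithinAt) ?_ ?_ <;> rw [interior_Ioo]
  · exact fun t ht => (hderiv ht).differentiableAt.differentiableWithinAt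
  · intro s hs t ht hst
    rw [(hderiv hs).deriv, (hderiv ht).deriv]
    exact monotoneOn_sin_sub_mul_cos_div (harccos ht) (harccos hs) (arccos_le_arccos hst)
end

section
/- Let h(d) = a_1 e^{c_1 d} + ⋯ + a_n e^{c_n d} where c_1 < c_2 < ⋯ < c_n and there is an index j such that a_i ≤ 0 for i < j and a_i ≥ 0 for i > j. Then h(d) > 0 for all d ≥ 1 if and only if h(1) > 0. -/
/-- If h(d) = ∑ᵢ aᵢ e^{cᵢ d} with c strictly increasing, aᵢ ≤ 0 before index j and
aᵢ ≥ 0 after index j, then h(d) > 0 for all d ≥ 1 if and only if h(1) > 0. -/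
theorem stmt_16 (n : ℕ) (a c : Fin n → ℝ) (hc : StrictMono c) (j : Fin n)
    (hneg : ∀ i, i < j → a i ≤ 0) (hpos : ∀ i, j < i → 0 ≤ a i) :
    (∀ d ≥ (1 : ℝ), 0 < ∑ i, a i * Real.exp (c i * d)) ↔
      0 < ∑ i, a i * Real.exp (c i * 1) := by
  constructor
  · intro H; exact H 1 le_rfl
  · intro h1 d hd
    set g : ℝ → ℝ := fun d => ∑ i, a i * Real.exp ((c i - c j) * d) with hg_def
    have key : ∀ d : ℝ, ∑ i, a i * Real.exp (c i * d) = Real.exp (c j * d) * g d := by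
      intro d
      rw [hg_def, Finset.mul_sum]
      refine Finset.sum_congr rfl fun i _ => ?_
      rw [← mul_assoc, mul_comm (Real.exp (c j * d)) (a i), mul_assoc,
        ← Real.exp_add]
      ring_nf
    have hgmono : Monotone g := by
      intro x y hxy
      refine Finset.sum_le_sum fun i _ => ?_
      rcases lt_trichotomy i j with hij | hij | hij
      · have ha := hneg i hij
        have hk : c i - c j ≤ 0 := sub_nonpos.mpr (hc hij).le
        have : (c i - c j) * y ≤ (c i - c j) * x := mul_le_mul_of_nonpos_left hxy hk
        exact mul_le_mul_of_nonpos_left (Real.exp_le_exp.mpr this) ha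
      · subst hij; simp
      · have ha := hpos i hij
        have hk : (0:ℝ) ≤ c i - c j := sub_nonneg.mpr (hc hij).le
        have : (c i - c j) * x ≤ (c i - c j) * y := mul_le_mul_of_nonneg_left hxy hk
        exact mul_le_mul_of_nonneg_left (Real.exp_le_exp.mpr this) ha
    have hg1 : 0 < g 1 := by
      rw [key 1] at h1
      rcases mul_pos_iff.mp h1 with h | h
      · exact h.2
      · exact absurd h.1 (not_lt.mpr (Real.exp_pos _).le)
    have hgd : 0 < g d := lt_of_lt_of_le hg1 (hgmono hd)
    rw [key d]
    exact mul_pos (Real.exp_pos _) hgd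
end

section
/- Let f: [0,∞) → [0,∞] have d-rapid decay, Λ ⊂ ℝ^d a lattice, and C = ∪_{i=1}^N (x_i + Λ) an N-point Λ-periodic configuration with representatives ω_N = {x_1,…,x_N}. Then the average energy E_f(C) := lim_{r→∞} E_f(C ∩ B(0,r))/|C ∩ B(0,r)| exists and equals (1/N)(E_{F_{f,Λ}}(ω_N) + N ∑_{0≠v∈Λ} f(|v|²)), where F_{f,Λ}(x) = ∑_{v∈Λ} f(|x+v|²) and E_F(ω_N) = ∑_{i≠j} F(x_i - x_j). -/
/-!
Index the points of `C` by `(i, v) ↦ x i + v`. Reindexing the partner `x j + w` of `x i + v` by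
`(j, w - v)` turns the energy of `C ∩ B(0, r)` into a sum, over the points `x i + v` in the ball,
of the site energy `∑_{(j, w) ≠ (i, 0)} f (‖x i - (x j + w)‖²)` of `x i` restricted to partners
still in the ball. This is at most the full site energy, and it contains every partner within
distance `T` of `x i` once `‖x i + v‖ < r - T`. So both the energy and the number of points are
squeezed between multiples of lattice-point counts `#(Λ ∩ B(0, r ± c))`, and all these counts grow
alike, `#(Λ ∩ B(0, r + a)) / #(Λ ∩ B(0, r)) → 1`, because the translates of a fundamental domain
pin them between volumes of balls of radii `r ± ρ`. Summing the site energies over `i` gives the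
numerator: partners with `j ≠ i` contribute `F (x i - x j)`, those with `j = i` contribute
`∑_{v ≠ 0} f (‖v‖²)`.
-/

open Filter Topology MeasureTheory Submodule
open scoped ENNReal

lemma ENNReal.tsum_ite_eq_natCard_mul {α : Type*} (p : α → Prop) [DecidablePred p]
    [Finite {a // p a}] (c : ℝ≥0∞) :
    ∑' a, (if p a then c else 0) = Nat.card {a // p a} * c := by
  have h := tsum_subtype {a | p a} (fun _ => c)
  simp only [Set.indicator_apply, Set.mem_ofPred_eq, ENNReal.tsum_const] at h
  rw [← h, Set.coe_ofPred, ENat.card_eq_coe_natCard]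
  rfl

lemma ENNReal.exists_one_lt_mul_le {β γ : ℝ≥0∞} (h : β < γ) : ∃ δ : ℝ≥0∞, 1 < δ ∧ β * δ ≤ γ := by
  rcases eq_or_ne β 0 with rfl | hβ
  · exact ⟨2, one_lt_two, by simp⟩
  · refine ⟨γ / β, ?_, ENNReal.mul_div_le⟩
    rwa [ENNReal.lt_div_iff_mul_lt (Or.inl hβ) (Or.inl h.ne_top), one_mul]

lemma ENNReal.exists_lt_tsum_ite_lt {α : Type*} (g : α → ℝ≥0∞) (d : α → ℝ) {s : ℝ≥0∞}
    (h : s < ∑' a, g a) : ∃ T : ℝ, s < ∑' a, if d a < T then g a else 0 := by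
  rw [ENNReal.tsum_eq_iSup_sum, lt_iSup_iff] at h
  obtain ⟨t, ht⟩ := h
  obtain ⟨M, hM⟩ := Finite.exists_le fun a : t => d a
  refine ⟨M + 1, ht.trans_le ?_⟩
  calc ∑ a ∈ t, g a = ∑ a ∈ t, if d a < M + 1 then g a else 0 :=
        Finset.sum_congr rfl fun a ha => (if_pos (by linarith [hM ⟨a, ha⟩])).symm
    _ ≤ _ := ENNReal.sum_le_tsum t

lemma tendsto_add_div_sub_pow_atTop (a c : ℝ) (n : ℕ) :
    Tendsto (fun r : ℝ => ((r + a) / (r - c)) ^ n) atTop (𝓝 1) := by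
  have h : Tendsto (fun r : ℝ => (1 + a / r) / (1 - c / r)) atTop (𝓝 1) := by
    have ha := tendsto_const_nhds (x := a).div_atTop tendsto_id
    have hc := tendsto_const_nhds (x := c).div_atTop tendsto_id
    have := (tendsto_const_nhds (x := (1 : ℝ)).add ha).div
      (tendsto_const_nhds (x := (1 : ℝ)).sub hc) (by norm_num)
    rwa [add_zero, sub_zero, div_one] at this
  refine (h.congr' ?_).pow n |>.trans (by rw [one_pow])
  filter_upwards [eventually_gt_atTop 0] with r hr
  field_simp

section Counting

variable {V : Type*} [NormedAddCommGroup V]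

noncomputable def latticeCount (L : AddSubgroup V) (r : ℝ) : ℕ :=
  Nat.card {v : L // ‖(v : V)‖ < r}

variable [ProperSpace V] (L : AddSubgroup V) [DiscreteTopology L]

lemma AddSubgroup.finite_norm_add_lt (y : V) (r : ℝ) : Finite {v : L // ‖y + v‖ < r} := by
  have hfin : (Metric.ball (-y) r ∩ (L : Set V)).Finite :=
    Metric.finite_isBounded_inter_isClosed (isDiscrete_iff_discreteTopology.2 ‹_›)
      Metric.isBounded_ball AddSubgroup.isClosed_of_discrete
  have := hfin.to_subtype
  refine Finite.of_injective (fun v => (⟨v, ?_, v.1.2⟩ : ↥(Metric.ball (-y) r ∩ (L : Set V)))) ?_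
  · simpa [dist_eq_norm, add_comm] using v.2
  · intro v w h
    exact Subtype.ext (Subtype.ext (congrArg Subtype.val h :))

instance AddSubgroup.finite_norm_lt (r : ℝ) : Finite {v : L // ‖(v : V)‖ < r} := by
  simpa using L.finite_norm_add_lt 0 r

lemma latticeCount_sub_le_card {y : V} {A : ℝ} (hy : ‖y‖ ≤ A) (r : ℝ) :
    latticeCount L (r - A) ≤ Nat.card {v : L // ‖y + v‖ < r} := by
  have := L.finite_norm_add_lt y r
  refine Finite.card_le_of_embedding (Subtype.impEmbedding _ _ fun v hv => ?_)
  calc ‖y + v‖ ≤ ‖y‖ + ‖(v : V)‖ := norm_add_le _ _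
    _ < r := by linarith

lemma card_le_latticeCount_add {y : V} {A : ℝ} (hy : ‖y‖ ≤ A) (r : ℝ) :
    Nat.card {v : L // ‖y + v‖ < r} ≤ latticeCount L (r + A) := by
  refine Finite.card_le_of_embedding (Subtype.impEmbedding _ _ fun v hv => ?_)
  calc ‖(v : V)‖ = ‖(y + v) - y‖ := by rw [add_sub_cancel_left]
    _ ≤ ‖y + v‖ + ‖y‖ := norm_sub_le _ _
    _ < r + A := by linarith

lemma latticeCount_pos {r : ℝ} (hr : 0 < r) : 0 < latticeCount L r :=
  haveI : Nonempty {v : L // ‖(v : V)‖ < r} := ⟨⟨0, by simpa using hr⟩⟩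
  Nat.card_pos

end Counting

section Growth

variable {E ι : Type*} [NormedAddCommGroup E] [NormedSpace ℝ E] [Fintype ι]
  (b : Module.Basis ι ℝ E)

local notation "Λ" => Submodule.toAddSubgroup (span ℤ (Set.range b))
local notation "D" => ZSpan.fundamentalDomain b

section Sandwich

variable [MeasurableSpace E] [BorelSpace E] (μ : Measure E) [μ.IsAddHaarMeasure]

omit [BorelSpace E] [μ.IsAddHaarMeasure] in
lemma tsum_ite_norm_lt_measure_fundamentalDomain (r : ℝ) :
    ∑' g : Λ, (if ‖(g : E)‖ < r then μ D else 0) = latticeCount Λ r * μ D :=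
  have : FiniteDimensional ℝ E := b.finiteDimensional_of_finite
  ENNReal.tsum_ite_eq_natCard_mul _ _

lemma measure_ball_sub_le_latticeCount_mul {ρ : ℝ} (hρ : D ⊆ Metric.closedBall 0 ρ) (r : ℝ) :
    μ (Metric.ball 0 (r - ρ)) ≤ latticeCount Λ r * μ D := by
  have : Countable Λ := inferInstanceAs (Countable (span ℤ (Set.range b)))
  rw [(ZSpan.isAddFundamentalDomain' b μ).measure_eq_tsum',
    ← tsum_ite_norm_lt_measure_fundamentalDomain]
  refine ENNReal.tsum_le_tsum fun g => ?_
  split_ifs with hg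
  · rw [← measure_vadd μ g D]
    exact measure_mono Set.inter_subset_right
  · refine (measure_mono fun z hz => hg ?_).trans (measure_empty (μ := μ)).le
    obtain ⟨hz, w, hw, rfl⟩ := hz
    have hw' : ‖w‖ ≤ ρ := by simpa using hρ hw
    have hz' : ‖(g : E) + w‖ < r - ρ := by simpa [AddSubgroup.vadd_def] using hz
    calc ‖(g : E)‖ = ‖((g : E) + w) - w‖ := by rw [add_sub_cancel_right]
      _ ≤ ‖(g : E) + w‖ + ‖w‖ := norm_sub_le _ _
      _ < r := by linarith

lemma latticeCount_mul_le_measure_ball_add {ρ : ℝ} (hρ : D ⊆ Metric.closedBall 0 ρ) (r : ℝ) :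
    latticeCount Λ r * μ D ≤ μ (Metric.ball 0 (r + ρ)) := by
  have : Countable Λ := inferInstanceAs (Countable (span ℤ (Set.range b)))
  rw [(ZSpan.isAddFundamentalDomain' b μ).measure_eq_tsum' (Metric.ball 0 (r + ρ)),
    ← tsum_ite_norm_lt_measure_fundamentalDomain]
  refine ENNReal.tsum_le_tsum fun g => ?_
  split_ifs with hg
  · rw [← measure_vadd μ g D, Set.inter_eq_right.2]
    rintro _ ⟨w, hw, rfl⟩
    have hw' : ‖w‖ ≤ ρ := by simpa using hρ hw
    simp only [Metric.mem_ball, dist_zero_right, vadd_eq_add, AddSubgroup.vadd_def]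
    calc ‖(g : E) + w‖ ≤ ‖(g : E)‖ + ‖w‖ := norm_add_le _ _
      _ < r + ρ := by linarith
  · exact zero_le

end Sandwich

theorem eventually_latticeCount_add_le (a : ℝ) {δ : ℝ≥0∞} (hδ : 1 < δ) :
    ∀ᶠ r in atTop, (latticeCount Λ (r + a) : ℝ≥0∞) ≤ δ * latticeCount Λ r := by
  let := borel E
  have : BorelSpace E := ⟨rfl⟩
  have : FiniteDimensional ℝ E := b.finiteDimensional_of_finite
  set μ : Measure E := Measure.addHaar
  obtain ⟨ρ, hρ⟩ := (ZSpan.fundamentalDomain_isBounded b).subset_closedBall 0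
  have hratio := (ENNReal.tendsto_ofReal (tendsto_add_div_sub_pow_atTop (a + ρ) ρ
    (Module.finrank ℝ E))).eventually_lt_const (by simpa using hδ)
  filter_upwards [hratio, eventually_gt_atTop (|a| + |ρ|)] with r hlt hr
  have hr₁ : 0 < r - ρ := by linarith [le_abs_self ρ, abs_nonneg a]
  have hr₂ : 0 < r + a + ρ := by linarith [neg_abs_le a, neg_abs_le ρ]
  refine (ENNReal.mul_le_mul_iff_left (ZSpan.measure_fundamentalDomain_ne_zero b (μ := μ))
    (ZSpan.fundamentalDomain_isBounded b).measure_lt_top.ne).1 ?_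
  calc (latticeCount Λ (r + a) : ℝ≥0∞) * μ D ≤ μ (Metric.ball 0 (r + a + ρ)) :=
        latticeCount_mul_le_measure_ball_add b μ hρ _
    _ = ENNReal.ofReal (((r + (a + ρ)) / (r - ρ)) ^ Module.finrank ℝ E) *
          μ (Metric.ball 0 (r - ρ)) := by
        rw [Measure.addHaar_ball_of_pos μ _ hr₂, Measure.addHaar_ball_of_pos μ _ hr₁, ← mul_assoc,
          ← ENNReal.ofReal_mul (pow_nonneg (div_pos (by linarith) hr₁).le _), div_pow,
          div_mul_cancel₀ _ (pow_pos hr₁ _).ne', add_assoc]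
    _ ≤ δ * (latticeCount Λ r * μ D) := by
        gcongr
        exact measure_ball_sub_le_latticeCount_mul b μ hρ r
    _ = δ * latticeCount Λ r * μ D := by rw [mul_assoc]

end Growth

theorem tendsto_div_of_count_bounds {c n : ℝ → ℕ} {e : ℝ → ℝ≥0∞} {S : ℝ≥0∞} {N : ℕ}
    (hN : N ≠ 0)
    (hc : ∀ a : ℝ, ∀ δ : ℝ≥0∞, 1 < δ → ∀ᶠ r in atTop, (c (r + a) : ℝ≥0∞) ≤ δ * c r)
    (hc_pos : ∀ᶠ r in atTop, c r ≠ 0) {A : ℝ}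
    (hn_le : ∀ r, n r ≤ N * c (r + A)) (hle_n : ∀ r, N * c (r - A) ≤ n r)
    (he_le : ∀ r, e r ≤ c (r + A) * S) (hle_e : ∀ S' < S, ∃ T, ∀ r, c (r - T) * S' ≤ e r) :
    Tendsto (fun r => e r / n r) atTop (𝓝 (S / N)) := by
  have hshift : ∀ a t : ℝ, ∀ δ : ℝ≥0∞, 1 < δ →
      ∀ᶠ r in atTop, (c (r + a) : ℝ≥0∞) ≤ δ * c (r - t) := by
    intro a t δ hδ
    filter_upwards [(tendsto_atTop_add_const_right atTop (-t) tendsto_id).eventually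
      (hc (a + t) δ hδ)] with r hr
    simpa [← sub_eq_add_neg] using hr
  have hN₀ : (N : ℝ≥0∞) ≠ 0 := by exact_mod_cast hN
  have hN_top : (N : ℝ≥0∞) ≠ ⊤ := ENNReal.natCast_ne_top N
  refine tendsto_of_le_liminf_of_limsup_le ?_ ?_
  · refine le_of_forall_lt_imp_le_of_dense fun a ha => ?_
    rw [ENNReal.lt_div_iff_mul_lt (Or.inl hN₀) (Or.inl hN_top)] at ha
    obtain ⟨S', haS', hS'⟩ := exists_between ha
    obtain ⟨δ, hδ, haδ⟩ := ENNReal.exists_one_lt_mul_le haS'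
    obtain ⟨T, hT⟩ := hle_e S' hS'
    refine le_liminf_of_le (by isBoundedDefault) ?_
    filter_upwards [hshift A T δ hδ, (tendsto_atTop_add_const_right atTop (-A)
      tendsto_id).eventually hc_pos] with r hr hpos
    have hn₀ : (n r : ℝ≥0∞) ≠ 0 := by
      have := hle_n r
      rw [← sub_eq_add_neg] at hpos
      exact_mod_cast (Nat.mul_pos (Nat.pos_of_ne_zero hN) (Nat.pos_of_ne_zero hpos)).trans_le
        this |>.ne'
    rw [ENNReal.le_div_iff_mul_le (Or.inl hn₀) (Or.inl (ENNReal.natCast_ne_top _))]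
    calc a * n r ≤ a * (N * c (r + A)) := by gcongr; exact_mod_cast hn_le r
      _ ≤ a * (N * (δ * c (r - T))) := by gcongr
      _ = a * N * δ * c (r - T) := by ring
      _ ≤ c (r - T) * S' := by rw [mul_comm _ S']; gcongr
      _ ≤ e r := hT r
  · refine le_of_forall_gt_imp_ge_of_dense fun a ha => ?_
    rw [ENNReal.div_lt_iff (Or.inl hN₀) (Or.inl hN_top)] at ha
    obtain ⟨δ, hδ, hSδ⟩ := ENNReal.exists_one_lt_mul_le ha
    refine limsup_le_of_le (by isBoundedDefault) ?_
    filter_upwards [hshift A A δ hδ] with r hr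
    refine ENNReal.div_le_of_le_mul ?_
    calc e r ≤ c (r + A) * S := he_le r
      _ ≤ δ * c (r - A) * S := by gcongr
      _ = S * δ * c (r - A) := by ring
      _ ≤ a * N * c (r - A) := by gcongr
      _ = a * ((N * c (r - A) : ℕ) : ℝ≥0∞) := by push_cast; ring
      _ ≤ a * n r := by gcongr; exact_mod_cast hle_n r

section Configuration

variable {V κ : Type*} [NormedAddCommGroup V] (f : ℝ → ℝ≥0∞) (L : AddSubgroup V) (x : κ → V)

noncomputable def periodization (y : V) : ℝ≥0∞ := ∑' w : L, f (‖y + w‖ ^ 2)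

noncomputable def configCount (r : ℝ) : ℕ := Nat.card {q : κ × L // ‖x q.1 + q.2‖ < r}

noncomputable def configEnergy (r : ℝ) : ℝ≥0∞ :=
  ∑' p : {q : (κ × L) × (κ × L) // q.1 ≠ q.2 ∧ ‖x q.1.1 + q.1.2‖ < r ∧ ‖x q.2.1 + q.2.2‖ < r},
    f (‖(x p.1.1.1 + p.1.1.2) - (x p.1.2.1 + p.1.2.2)‖ ^ 2)

open Classical in
noncomputable def siteTerm (i : κ) (q : κ × L) : ℝ≥0∞ :=
  if q = (i, 0) then 0 else f (‖x i - (x q.1 + q.2)‖ ^ 2)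

noncomputable def siteEnergy (i : κ) : ℝ≥0∞ := ∑' q, siteTerm f L x i q

noncomputable def truncSiteEnergy (T : ℝ) (i : κ) : ℝ≥0∞ :=
  ∑' q, if ‖x i - (x q.1 + q.2)‖ < T then siteTerm f L x i q else 0

variable {f L x}

lemma configEnergy_eq_tsum_siteTerm (r : ℝ) :
    configEnergy f L x r = ∑' p : κ × L, ∑' q : κ × L,
      if ‖x p.1 + p.2‖ < r ∧ ‖x q.1 + q.2 + p.2‖ < r then siteTerm f L x p.1 q else 0 := by
  classical
  let shear : (κ × L) × (κ × L) ≃ (κ × L) × (κ × L) :=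
    Equiv.prodShear (Equiv.refl _) fun p => (Equiv.refl κ).prodCongr (Equiv.addRight p.2)
  refine (tsum_subtype (α := ℝ≥0∞) {q : (κ × L) × (κ × L) | _}
    fun z => f (‖(x z.1.1 + z.1.2) - (x z.2.1 + z.2.2)‖ ^ 2)).trans ?_
  rw [← shear.tsum_eq, ENNReal.tsum_prod']
  refine tsum_congr fun p => tsum_congr fun q => ?_
  obtain ⟨⟨i, v⟩, ⟨j, w⟩⟩ := p, q
  have hshear : shear ((i, v), (j, w)) = ((i, v), (j, w + v)) := rfl
  have hne : (i, v) ≠ (j, w + v) ↔ (j, w) ≠ (i, 0) := by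
    simp [Prod.ext_iff, eq_comm (a := i)]
  have hdiff : x i + (v : V) - (x j + w + v) = x i - (x j + w) := by abel
  rw [hshear, Set.indicator_apply, siteTerm]
  simp only [Set.mem_ofPred_eq, hne, hdiff, AddSubgroup.coe_add, ← add_assoc]
  split_ifs <;> tauto

lemma exists_lt_sum_truncSiteEnergy [Fintype κ] {s : ℝ≥0∞} (hs : s < ∑ i, siteEnergy f L x i) :
    ∃ T, s < ∑ i, truncSiteEnergy f L x T i := by
  have hprod (g : κ → κ × L → ℝ≥0∞) : ∑ i, ∑' q, g i q = ∑' z : κ × (κ × L), g z.1 z.2 := by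
    rw [ENNReal.tsum_prod, tsum_fintype]
  simp only [siteEnergy, truncSiteEnergy, hprod] at hs ⊢
  exact ENNReal.exists_lt_tsum_ite_lt _ _ hs

lemma siteEnergy_eq [Fintype κ] [DecidableEq κ] (i : κ) :
    siteEnergy f L x i = (∑ j, if i ≠ j then periodization f L (x i - x j) else 0) +
      ∑' v : {w : L // w ≠ 0}, f (‖((v : L) : V)‖ ^ 2) := by
  have hj : ∀ j, ∑' w : L, siteTerm f L x i (j, w) =
      (if i ≠ j then periodization f L (x i - x j) else 0) +
        if j = i then ∑' v : {w : L // w ≠ 0}, f (‖((v : L) : V)‖ ^ 2) else 0 := by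
    intro j
    by_cases hij : j = i
    · subst hij
      rw [if_neg (not_not.2 rfl), if_pos rfl, zero_add]
      refine Eq.trans ?_ (tsum_subtype (α := ℝ≥0∞) {w : L | w ≠ 0} fun w => f (‖(w : V)‖ ^ 2)).symm
      refine tsum_congr fun w => ?_
      by_cases hw : w = 0 <;> simp [siteTerm, hw]
    · rw [if_pos (Ne.symm hij), if_neg hij, add_zero, periodization, ← (Equiv.neg L).tsum_eq]
      refine tsum_congr fun w => ?_
      rw [siteTerm, if_neg (by simp [hij])]
      congr 3
      simp only [Equiv.neg_apply, AddSubgroup.coe_neg]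
      abel
  rw [siteEnergy, ENNReal.tsum_prod', tsum_fintype, Finset.sum_congr rfl fun j _ => hj j,
    Finset.sum_add_distrib, Finset.sum_ite_eq' Finset.univ i, if_pos (Finset.mem_univ i)]

lemma sum_siteEnergy_eq [Fintype κ] [DecidableEq κ] :
    ∑ i, siteEnergy f L x i = (∑ i, ∑ j, if i ≠ j then periodization f L (x i - x j) else 0) +
      Fintype.card κ * ∑' v : {w : L // w ≠ 0}, f (‖((v : L) : V)‖ ^ 2) := by
  simp only [siteEnergy_eq, Finset.sum_add_distrib, Finset.sum_const, Finset.card_univ,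
    nsmul_eq_mul]

variable [Fintype κ] [ProperSpace V] [DiscreteTopology L]

lemma tsum_ite_norm_lt_eq_sum (H : κ → ℝ≥0∞) (r : ℝ) :
    ∑' p : κ × L, (if ‖x p.1 + p.2‖ < r then H p.1 else 0) =
      ∑ i, Nat.card {v : L // ‖x i + v‖ < r} * H i := by
  rw [ENNReal.tsum_prod (f := fun i (v : L) => if ‖x i + v‖ < r then H i else 0), tsum_fintype]
  refine Finset.sum_congr rfl fun i _ => ?_
  have := L.finite_norm_add_lt (x i) r
  exact ENNReal.tsum_ite_eq_natCard_mul _ _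

lemma configCount_eq_sum (r : ℝ) :
    configCount L x r = ∑ i, Nat.card {v : L // ‖x i + v‖ < r} := by
  have := fun i => L.finite_norm_add_lt (x i) r
  rw [configCount, Nat.card_congr (Equiv.subtypeProdEquivSigmaSubtype fun i (v : L) =>
    ‖x i + v‖ < r), Nat.card_sigma]

variable {A : ℝ} (hA : ∀ i, ‖x i‖ ≤ A)
include hA

lemma card_mul_latticeCount_sub_le_configCount (r : ℝ) :
    Fintype.card κ * latticeCount L (r - A) ≤ configCount L x r := by
  rw [configCount_eq_sum, ← smul_eq_mul, ← Finset.card_univ, ← Finset.sum_const]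
  exact Finset.sum_le_sum fun i _ => latticeCount_sub_le_card L (hA i) r

lemma configCount_le_card_mul_latticeCount_add (r : ℝ) :
    configCount L x r ≤ Fintype.card κ * latticeCount L (r + A) := by
  rw [configCount_eq_sum, ← smul_eq_mul, ← Finset.card_univ, ← Finset.sum_const]
  exact Finset.sum_le_sum fun i _ => card_le_latticeCount_add L (hA i) r

lemma configEnergy_le_latticeCount_mul (r : ℝ) :
    configEnergy f L x r ≤ latticeCount L (r + A) * ∑ i, siteEnergy f L x i := by
  calc configEnergy f L x r
      ≤ ∑' p : κ × L, (if ‖x p.1 + p.2‖ < r then siteEnergy f L x p.1 else 0) := by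
        rw [configEnergy_eq_tsum_siteTerm]
        refine ENNReal.tsum_le_tsum fun p => ?_
        split_ifs with hp
        · exact ENNReal.tsum_le_tsum fun q => by split_ifs <;> simp
        · exact (ENNReal.tsum_eq_zero.2 fun q => if_neg fun h => hp h.1).le
    _ = ∑ i, Nat.card {v : L // ‖x i + v‖ < r} * siteEnergy f L x i :=
        tsum_ite_norm_lt_eq_sum _ r
    _ ≤ ∑ i, latticeCount L (r + A) * siteEnergy f L x i := by
        gcongr with i
        exact_mod_cast card_le_latticeCount_add L (hA i) r
    _ = latticeCount L (r + A) * ∑ i, siteEnergy f L x i := (Finset.mul_sum ..).symm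

lemma latticeCount_mul_le_configEnergy (T r : ℝ) :
    latticeCount L (r - T - A) * ∑ i, truncSiteEnergy f L x T i ≤ configEnergy f L x r := by
  calc latticeCount L (r - T - A) * ∑ i, truncSiteEnergy f L x T i
      = ∑ i, latticeCount L (r - T - A) * truncSiteEnergy f L x T i := Finset.mul_sum ..
    _ ≤ ∑ i, Nat.card {v : L // ‖x i + v‖ < r - T} * truncSiteEnergy f L x T i := by
        gcongr with i
        exact_mod_cast latticeCount_sub_le_card L (hA i) (r - T)
    _ = ∑' p : κ × L, (if ‖x p.1 + p.2‖ < r - T then truncSiteEnergy f L x T p.1 else 0) :=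
        (tsum_ite_norm_lt_eq_sum _ _).symm
    _ ≤ configEnergy f L x r := by
        rw [configEnergy_eq_tsum_siteTerm]
        refine ENNReal.tsum_le_tsum fun p => ?_
        split_ifs with hp
        · refine ENNReal.tsum_le_tsum fun q => ?_
          split_ifs with hq hpq
          · exact le_rfl
          · refine absurd ⟨by linarith [norm_nonneg (x p.1 - (x q.1 + q.2))], ?_⟩ hpq
            calc ‖x q.1 + q.2 + p.2‖ = ‖(x p.1 + p.2) - (x p.1 - (x q.1 + q.2))‖ := by
                  congr 1; abel
              _ ≤ ‖x p.1 + p.2‖ + ‖x p.1 - (x q.1 + q.2)‖ := norm_sub_le _ _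
              _ < r := by linarith
          all_goals exact zero_le
        · exact zero_le

end Configuration

theorem tendsto_configEnergy_div_configCount {V κ : Type*} [NormedAddCommGroup V] [ProperSpace V]
    {L : AddSubgroup V} [DiscreteTopology L] [Fintype κ] [Nonempty κ] (f : ℝ → ℝ≥0∞)
    (x : κ → V) (hL : ∀ a : ℝ, ∀ δ : ℝ≥0∞, 1 < δ →
      ∀ᶠ r in atTop, (latticeCount L (r + a) : ℝ≥0∞) ≤ δ * latticeCount L r) :
    Tendsto (fun r => configEnergy f L x r / configCount L x r) atTop
      (𝓝 ((∑ i, siteEnergy f L x i) / Fintype.card κ)) := by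
  obtain ⟨A, hA⟩ := Finite.exists_le fun i => ‖x i‖
  refine tendsto_div_of_count_bounds Fintype.card_ne_zero hL
    ((eventually_gt_atTop 0).mono fun r hr => (latticeCount_pos L hr).ne')
    (configCount_le_card_mul_latticeCount_add hA) (card_mul_latticeCount_sub_le_configCount hA)
    (configEnergy_le_latticeCount_mul hA) fun s hs => ?_
  obtain ⟨T, hT⟩ := exists_lt_sum_truncSiteEnergy hs
  refine ⟨T + A, fun r => ?_⟩
  rw [← sub_sub]
  exact (mul_le_mul_right hT.le _).trans (latticeCount_mul_le_configEnergy hA T r)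

theorem stmt_18_general (d N : ℕ) (hN : 0 < N)
    (f : ℝ → ℝ≥0∞)
    (b : Module.Basis (Fin d) ℝ (EuclideanSpace ℝ (Fin d)))
    (Λ : AddSubgroup (EuclideanSpace ℝ (Fin d)))
    (hΛ : Λ = AddSubgroup.closure (Set.range ⇑b))
    (x : Fin N → EuclideanSpace ℝ (Fin d))
    (F : EuclideanSpace ℝ (Fin d) → ℝ≥0∞)
    (hF : ∀ y, F y = ∑' w : Λ, f (‖y + (w : EuclideanSpace ℝ (Fin d))‖ ^ 2))
    (E : ℝ → ℝ≥0∞)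
    (hE : ∀ r : ℝ, E r = ∑' p : {q : (Fin N × Λ) × (Fin N × Λ) // q.1 ≠ q.2 ∧
          ‖x q.1.1 + (q.1.2 : EuclideanSpace ℝ (Fin d))‖ < r ∧
          ‖x q.2.1 + (q.2.2 : EuclideanSpace ℝ (Fin d))‖ < r},
        f (‖(x (p : (Fin N × Λ) × (Fin N × Λ)).1.1 +
              ((p : (Fin N × Λ) × (Fin N × Λ)).1.2 : EuclideanSpace ℝ (Fin d))) -
            (x (p : (Fin N × Λ) × (Fin N × Λ)).2.1 +
              ((p : (Fin N × Λ) × (Fin N × Λ)).2.2 : EuclideanSpace ℝ (Fin d)))‖ ^ 2))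
    (card : ℝ → ℕ)
    (hcard : ∀ r : ℝ, card r =
      Nat.card {q : Fin N × Λ // ‖x q.1 + (q.2 : EuclideanSpace ℝ (Fin d))‖ < r}) :
    Filter.Tendsto (fun r : ℝ => E r / (card r : ℝ≥0∞)) Filter.atTop
      (nhds (((∑ i, ∑ j, if i ≠ j then F (x i - x j) else 0) +
          (N : ℝ≥0∞) * ∑' v : {w : Λ // w ≠ 0},
            f (‖((v : Λ) : EuclideanSpace ℝ (Fin d))‖ ^ 2)) / (N : ℝ≥0∞))) := by
  obtain rfl : Λ = (span ℤ (Set.range b)).toAddSubgroup :=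
    hΛ.trans (span_int_eq_addSubgroupClosure _).symm
  obtain rfl : F = periodization f _ := funext hF
  obtain rfl : E = configEnergy f _ x := funext hE
  obtain rfl : card = configCount _ x := funext hcard
  have : Nonempty (Fin N) := ⟨⟨0, hN⟩⟩
  simpa only [sum_siteEnergy_eq, Fintype.card_fin] using
    tendsto_configEnergy_div_configCount f x (eventually_latticeCount_add_le b)

/-- For an N-point Λ-periodic configuration C = ∪ᵢ (xᵢ + Λ) and a potential f of d-rapid
decay, the average energy E_f(C) = lim_{r→∞} E_f(C ∩ B(0,r))/|C ∩ B(0,r)| exists and equals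
(1/N)(E_{F_{f,Λ}}(ω_N) + N ∑_{0≠v∈Λ} f(|v|²)). -/
theorem stmt_18 (d N : ℕ) (hN : 0 < N)
    (f : ℝ → ℝ≥0∞)
    (hf : ∃ s > (d : ℝ), ∃ C : ℝ, ∀ r ≥ (1 : ℝ), f (r ^ 2) ≤ ENNReal.ofReal (C * r ^ (-s)))
    (b : Module.Basis (Fin d) ℝ (EuclideanSpace ℝ (Fin d)))
    (Λ : AddSubgroup (EuclideanSpace ℝ (Fin d)))
    (hΛ : Λ = AddSubgroup.closure (Set.range ⇑b))
    (x : Fin N → EuclideanSpace ℝ (Fin d))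
    (F : EuclideanSpace ℝ (Fin d) → ℝ≥0∞)
    (hF : ∀ y, F y = ∑' w : Λ, f (‖y + (w : EuclideanSpace ℝ (Fin d))‖ ^ 2))
    (E : ℝ → ℝ≥0∞)
    (hE : ∀ r : ℝ, E r = ∑' p : {q : (Fin N × Λ) × (Fin N × Λ) // q.1 ≠ q.2 ∧
          ‖x q.1.1 + (q.1.2 : EuclideanSpace ℝ (Fin d))‖ < r ∧
          ‖x q.2.1 + (q.2.2 : EuclideanSpace ℝ (Fin d))‖ < r},
        f (‖(x (p : (Fin N × Λ) × (Fin N × Λ)).1.1 +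
              ((p : (Fin N × Λ) × (Fin N × Λ)).1.2 : EuclideanSpace ℝ (Fin d))) -
            (x (p : (Fin N × Λ) × (Fin N × Λ)).2.1 +
              ((p : (Fin N × Λ) × (Fin N × Λ)).2.2 : EuclideanSpace ℝ (Fin d)))‖ ^ 2))
    (card : ℝ → ℕ)
    (hcard : ∀ r : ℝ, card r =
      Nat.card {q : Fin N × Λ // ‖x q.1 + (q.2 : EuclideanSpace ℝ (Fin d))‖ < r}) :
    Filter.Tendsto (fun r : ℝ => E r / (card r : ℝ≥0∞)) Filter.atTop
      (nhds (((∑ i, ∑ j, if i ≠ j then F (x i - x j) else 0) +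
          (N : ℝ≥0∞) * ∑' v : {w : Λ // w ≠ 0},
            f (‖((v : Λ) : EuclideanSpace ℝ (Fin d))‖ ^ 2)) / (N : ℝ≥0∞))) :=
  stmt_18_general d N hN f b Λ hΛ x F hF E hE card hcard
end
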